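/- arXiv:1909.00238 — 2 statements merged into one kernel-verified Lean document; each statement's English description precedes it below -/
import Mathlib

section
/- Let H be a k-uniform hypergraph on n vertices with principal eigenpair (ρ, x) normalized by ∑_v x_v^k = 1, minimum degree δ > 0. Equality x_min = (δ/(ρ + δ(n−1)))^{1/k} holds if and only if there exists a vertex v such that x_w = x_min for all w ≠ v and x_v = (ρ/δ)^{1/k} · x_min. -/
/-!
Write `m` and `M` for the smallest and largest entries of `x`. Evaluating the eigenequation at a
vertex of minimum degree `δ` and bounding each product by `M ^ (k - 1)` gives
`ρ m ^ k ≤ δ m M ^ (k - 1) ≤ δ M ^ k`, while the normalization gives `M ^ k + (n - 1) m ^ k ≤ 1`.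
Equality `m = (δ / (ρ + δ (n - 1))) ^ (1 / k)` means `(ρ / δ) m ^ k + (n - 1) m ^ k = 1`, which
squeezes the first chain into equalities: then `M = m`, so `x` is constant and `M ^ k = (ρ / δ) m ^ k`.
Conversely, the normalization evaluated on the described vector is exactly that equation.
-/

open Finset

lemma eq_rpow_one_div_iff_pow_eq {k : ℕ} (hk : k ≠ 0) {a b : ℝ} (ha : 0 ≤ a) (hb : 0 ≤ b) :
    a = b ^ ((1 : ℝ) / k) ↔ a ^ k = b := by
  rw [one_div, Real.eq_rpow_inv ha hb (Nat.cast_ne_zero.mpr hk), Real.rpow_natCast]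

section

variable {V : Type*} [DecidableEq V]

section Hypergraph

variable {k : ℕ} {E : Finset (Finset V)} {x : V → ℝ}

lemma sum_prod_erase_le_card_mul_pow (hunif : ∀ e ∈ E, e.card = k) (hx : ∀ v, 0 ≤ x v)
    {M : ℝ} (hM : ∀ v, x v ≤ M) (v : V) :
    ∑ e ∈ E.filter (v ∈ ·), ∏ u ∈ e.erase v, x u ≤ #(E.filter (v ∈ ·)) * M ^ (k - 1) := by
  rw [← nsmul_eq_mul]
  refine sum_le_card_nsmul _ _ _ fun e he => ?_
  rw [mem_filter] at he
  calc ∏ u ∈ e.erase v, x u ≤ ∏ _u ∈ e.erase v, M := prod_le_prod (fun u _ => hx u) fun u _ => hM u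
    _ = M ^ (k - 1) := by rw [prod_const, card_erase_of_mem he.2, hunif e he.1]

lemma eigenvalue_mul_pow_le (hk : k ≠ 0) (hunif : ∀ e ∈ E, e.card = k) (hx : ∀ v, 0 ≤ x v)
    {ρ : ℝ} (hρ : 0 ≤ ρ)
    (heig : ∀ v : V, ∑ e ∈ E.filter (v ∈ ·), ∏ u ∈ e.erase v, x u = ρ * x v ^ (k - 1))
    {m M : ℝ} (hm : 0 ≤ m) (hmx : ∀ v, m ≤ x v) (hxM : ∀ v, x v ≤ M) (v : V) :
    ρ * m ^ k ≤ #(E.filter (v ∈ ·)) * (m * M ^ (k - 1)) :=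
  calc ρ * m ^ k = ρ * m ^ (k - 1) * m := by rw [mul_assoc, pow_sub_one_mul hk]
    _ ≤ ρ * x v ^ (k - 1) * m := by gcongr; exact hmx v
    _ = (∑ e ∈ E.filter (v ∈ ·), ∏ u ∈ e.erase v, x u) * m := by rw [heig v]
    _ ≤ #(E.filter (v ∈ ·)) * M ^ (k - 1) * m := by
        gcongr; exact sum_prod_erase_le_card_mul_pow hunif hx hxM v
    _ = #(E.filter (v ∈ ·)) * (m * M ^ (k - 1)) := by ring

end Hypergraph

variable [Fintype V]

lemma add_card_sub_one_mul_le_sum {f : V → ℝ} {c : ℝ} (v : V) (h : ∀ w, w ≠ v → c ≤ f w) :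
    f v + (Fintype.card V - 1 : ℝ) * c ≤ ∑ w, f w := by
  rw [← add_sum_erase univ f (mem_univ v)]
  gcongr
  calc (Fintype.card V - 1 : ℝ) * c = #(univ.erase v) • c := by
        rw [card_erase_of_mem (mem_univ v), card_univ, nsmul_eq_mul,
          Nat.cast_sub (Fintype.card_pos_iff.mpr ⟨v⟩), Nat.cast_one]
    _ ≤ ∑ w ∈ univ.erase v, f w := card_nsmul_le_sum _ _ _ fun w hw => h w (ne_of_mem_erase hw)

lemma sum_eq_add_card_sub_one_mul {f : V → ℝ} {c : ℝ} (v : V) (h : ∀ w, w ≠ v → f w = c) :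
    ∑ w, f w = f v + (Fintype.card V - 1 : ℝ) * c := by
  rw [← add_sum_erase univ f (mem_univ v), sum_congr rfl fun w hw => h w (ne_of_mem_erase hw),
    sum_const, card_erase_of_mem (mem_univ v), card_univ, nsmul_eq_mul,
    Nat.cast_sub (Fintype.card_pos_iff.mpr ⟨v⟩), Nat.cast_one]

lemma eq_of_sum_pow_eq_add_card_sub_one_mul {k : ℕ} (hk : k ≠ 0) {x : V → ℝ} {m c : ℝ}
    (hm : 0 < m) (hmx : ∀ w, m ≤ x w) {v : V} (hxv : ∀ w, x w ≤ x v)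
    (hc : c * m ^ k ≤ m * x v ^ (k - 1))
    (hsum : c * m ^ k + (Fintype.card V - 1 : ℝ) * m ^ k = ∑ w, x w ^ k) :
    (∀ w, w ≠ v → x w = m) ∧ x v ^ k = c * m ^ k := by
  have hv : 0 < x v := hm.trans_le (hmx v)
  have hup : x v ^ k ≤ c * m ^ k := by
    have := add_card_sub_one_mul_le_sum (f := fun w => x w ^ k) v
      fun w _ => pow_le_pow_left₀ hm.le (hmx w) k
    linarith
  have hvm : x v ≤ m := by
    refine le_of_mul_le_mul_left ?_ (pow_pos hv (k - 1))
    rw [pow_sub_one_mul hk]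
    linarith [mul_comm m (x v ^ (k - 1))]
  refine ⟨fun w _ => le_antisymm ((hxv w).trans hvm) (hmx w), le_antisymm hup ?_⟩
  calc c * m ^ k ≤ m * x v ^ (k - 1) := hc
    _ ≤ x v * x v ^ (k - 1) := mul_le_mul_of_nonneg_right (hmx v) (pow_pos hv _).le
    _ = x v ^ k := by rw [mul_comm, pow_sub_one_mul hk]

end

theorem stmt11 (V : Type*) [Fintype V] [DecidableEq V] [Nonempty V]
    (k : ℕ) (hk : 2 ≤ k)
    (E : Finset (Finset V))
    (hunif : ∀ e ∈ E, e.card = k)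
    (x : V → ℝ) (hx : ∀ v, 0 < x v)
    (ρ : ℝ) (hρ : 0 < ρ)
    (heig : ∀ v : V, ∑ e ∈ E.filter (fun e => v ∈ e), ∏ u ∈ e.erase v, x u
      = ρ * x v ^ (k - 1))
    (hnorm : ∑ v : V, x v ^ k = 1)
    (hδ : 0 < (Finset.univ.inf' Finset.univ_nonempty (fun v => ((E.filter (fun e => v ∈ e)).card : ℝ)))) :
    (Finset.univ.inf' Finset.univ_nonempty x) = ((Finset.univ.inf' Finset.univ_nonempty (fun v => ((E.filter (fun e => v ∈ e)).card : ℝ))) / (ρ + (Finset.univ.inf' Finset.univ_nonempty (fun v => ((E.filter (fun e => v ∈ e)).card : ℝ))) * ((Fintype.card V : ℝ) - 1))) ^ ((1:ℝ)/(k:ℝ)) ↔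
      ∃ v : V, (∀ w : V, w ≠ v → x w = (Finset.univ.inf' Finset.univ_nonempty x)) ∧
        x v = (ρ / (Finset.univ.inf' Finset.univ_nonempty (fun v => ((E.filter (fun e => v ∈ e)).card : ℝ)))) ^ ((1:ℝ)/(k:ℝ)) * (Finset.univ.inf' Finset.univ_nonempty x) := by
  set δ := univ.inf' univ_nonempty fun v => ((E.filter (fun e => v ∈ e)).card : ℝ)
  set m := univ.inf' univ_nonempty x
  set n : ℝ := (Fintype.card V : ℝ)
  have hk0 : k ≠ 0 := by omega
  have hm : 0 < m := (lt_inf'_iff _).mpr fun v _ => hx v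
  have hmx : ∀ v, m ≤ x v := fun v => inf'_le _ (mem_univ v)
  have hn : 1 ≤ n := Nat.one_le_cast.mpr Fintype.card_pos
  have hD : 0 < ρ + δ * (n - 1) := by positivity
  have hcriterion :
      m = (δ / (ρ + δ * (n - 1))) ^ ((1:ℝ)/k) ↔ ρ / δ * m ^ k + (n - 1) * m ^ k = 1 := by
    rw [eq_rpow_one_div_iff_pow_eq hk0 hm.le (by positivity), eq_div_iff hD.ne',
      ← mul_right_inj' hδ.ne']
    constructor <;> intro h <;> field_simp at h ⊢ <;> linarith
  have hvertex : ∀ v, x v = (ρ / δ) ^ ((1:ℝ)/k) * m ↔ x v ^ k = ρ / δ * m ^ k := fun v => by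
    rw [← pow_left_inj₀ (hx v).le (by positivity) hk0, mul_pow, one_div,
      Real.rpow_inv_natCast_pow (by positivity) hk0]
  simp_rw [hvertex, hcriterion]
  constructor
  · intro h
    obtain ⟨v, -, hvM⟩ := exists_mem_eq_sup' univ_nonempty x
    obtain ⟨v₀, -, hv₀⟩ : ∃ v₀ ∈ univ, δ = (E.filter (fun e => v₀ ∈ e)).card :=
      exists_mem_eq_inf' univ_nonempty _
    have hxv : ∀ w, x w ≤ x v := fun w => hvM ▸ le_sup' x (mem_univ w)
    have hc : ρ / δ * m ^ k ≤ m * x v ^ (k - 1) := by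
      rw [div_mul_eq_mul_div, div_le_iff₀ hδ, mul_comm _ δ, hv₀]
      exact eigenvalue_mul_pow_le hk0 hunif (fun v => (hx v).le) hρ.le heig hm.le hmx hxv v₀
    exact ⟨v, eq_of_sum_pow_eq_add_card_sub_one_mul hk0 hm hmx hxv hc (h.trans hnorm.symm)⟩
  · rintro ⟨v, hw, hv⟩
    have hsum := sum_eq_add_card_sub_one_mul (f := fun w => x w ^ k) v
      fun w hw' => by rw [hw w hw']
    rw [hnorm, hv] at hsum
    exact hsum.symm
end

section
/- Let H be a k-uniform hypergraph with principal eigenpair (ρ, x), maximum degree Δ and minimum degree δ > 0. Let γ = x_max/x_min and Γ = x^max/x^min where x^e = ∏_{u∈e} x_u, x^max = max_e x^e, x^min = min_e x^e. Then Γ^{1/k} ≤ γ ≤ ((Δ/δ)·Γ)^{1/k}. -/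
/-!
Every edge weight `x^e` lies between `x_min^k` and `x_max^k`, which gives `Γ ≤ γ^k`.
Multiplying the eigenequation at `v` by `x_v` turns it into `ρ x_v^k = ∑_{e ∋ v} x^e`; evaluated
at a vertex where `x` is maximal this gives `ρ x_max^k ≤ Δ x^max`, and at one where `x` is
minimal `δ x^min ≤ ρ x_min^k`. Dividing the two yields `γ^k ≤ (Δ/δ) Γ`.
-/

open Finset

lemma Finset.pow_card_le_prod_of_le {ι R : Type*} [CommSemiring R] [PartialOrder R]
    [IsOrderedRing R] {s : Finset ι} {f : ι → R} {a : R} (ha : 0 ≤ a)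
    (h : ∀ i ∈ s, a ≤ f i) : a ^ #s ≤ ∏ i ∈ s, f i := by
  simpa only [prod_const] using prod_le_prod (fun _ _ => ha) h

lemma Finset.prod_le_pow_card_of_le {ι R : Type*} [CommSemiring R] [PartialOrder R]
    [IsOrderedRing R] {s : Finset ι} {f : ι → R} {a : R} (hf : ∀ i ∈ s, 0 ≤ f i)
    (h : ∀ i ∈ s, f i ≤ a) : ∏ i ∈ s, f i ≤ a ^ #s := by
  simpa only [prod_const] using prod_le_prod hf h

lemma Finset.sup'_div_inf'_pos {ι : Type*} {s : Finset ι} (H : s.Nonempty) {f : ι → ℝ}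
    (hf : ∀ i ∈ s, 0 < f i) : 0 < s.sup' H f / s.inf' H f := by
  have hinf : 0 < s.inf' H f := (lt_inf'_iff H).2 hf
  exact div_pos (hinf.trans_le ((inf'_le f H.choose_spec).trans (le_sup' f H.choose_spec))) hinf

lemma Finset.sum_filter_mem_prod_eq_mul_sum_prod_erase {V R : Type*} [DecidableEq V]
    [CommSemiring R] (E : Finset (Finset V)) (x : V → R) (v : V) :
    ∑ e ∈ E with v ∈ e, ∏ u ∈ e, x u = x v * ∑ e ∈ E with v ∈ e, ∏ u ∈ e.erase v, x u := by
  rw [mul_sum]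
  exact sum_congr rfl fun e he => (mul_prod_erase e x (mem_filter.mp he).2).symm

lemma mul_pow_eq_sum_prod_of_eigen {V R : Type*} [DecidableEq V] [CommSemiring R]
    {k : ℕ} {E : Finset (Finset V)} {x : V → R} {ρ : R} (hk : 1 ≤ k)
    (heig : ∀ v, ∑ e ∈ E with v ∈ e, ∏ u ∈ e.erase v, x u = ρ * x v ^ (k - 1)) (v : V) :
    ρ * x v ^ k = ∑ e ∈ E with v ∈ e, ∏ u ∈ e, x u := by
  rw [sum_filter_mem_prod_eq_mul_sum_prod_erase, heig v, mul_left_comm, ← pow_succ',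
    Nat.sub_add_cancel hk]

section UniformHypergraph

variable {V : Type*} [Fintype V] [Nonempty V] {k : ℕ} {E : Finset (Finset V)} {x : V → ℝ}

lemma inf'_pow_le_prod (hunif : ∀ e ∈ E, #e = k) (hx : ∀ v, 0 ≤ x v) {e : Finset V}
    (he : e ∈ E) : univ.inf' univ_nonempty x ^ k ≤ ∏ u ∈ e, x u := by
  rw [← hunif e he]
  exact pow_card_le_prod_of_le (le_inf' _ _ fun v _ => hx v) fun u _ => inf'_le x (mem_univ u)

lemma prod_le_sup'_pow (hunif : ∀ e ∈ E, #e = k) (hx : ∀ v, 0 ≤ x v) {e : Finset V}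
    (he : e ∈ E) : ∏ u ∈ e, x u ≤ univ.sup' univ_nonempty x ^ k := by
  rw [← hunif e he]
  exact prod_le_pow_card_of_le (fun u _ => hx u) fun u _ => le_sup' x (mem_univ u)

lemma sup'_prod_div_inf'_prod_le_pow (hunif : ∀ e ∈ E, #e = k) (hx : ∀ v, 0 < x v)
    (hE : E.Nonempty) :
    E.sup' hE (fun e => ∏ u ∈ e, x u) / E.inf' hE (fun e => ∏ u ∈ e, x u)
      ≤ (univ.sup' univ_nonempty x / univ.inf' univ_nonempty x) ^ k := by
  have hxmax : 0 ≤ univ.sup' univ_nonempty x :=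
    le_sup'_of_le x (mem_univ (Classical.arbitrary V)) (hx _).le
  have hxmin : 0 < univ.inf' univ_nonempty x := (lt_inf'_iff _).2 fun v _ => hx v
  rw [div_pow]
  exact div_le_div₀ (by positivity)
    (sup'_le _ _ fun e he => prod_le_sup'_pow hunif (fun v => (hx v).le) he) (by positivity)
    (le_inf' _ _ fun e he => inf'_pow_le_prod hunif (fun v => (hx v).le) he)

variable [DecidableEq V] {ρ : ℝ}

lemma mul_sup'_pow_le_of_eigen (hk : 1 ≤ k)
    (heig : ∀ v, ∑ e ∈ E with v ∈ e, ∏ u ∈ e.erase v, x u = ρ * x v ^ (k - 1))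
    (hx : ∀ v, 0 ≤ x v) (hE : E.Nonempty) :
    ρ * univ.sup' univ_nonempty x ^ k
      ≤ univ.sup' univ_nonempty (fun v => (#{e ∈ E | v ∈ e} : ℝ))
        * E.sup' hE (fun e => ∏ u ∈ e, x u) := by
  obtain ⟨v, -, hv⟩ := exists_mem_eq_sup' univ_nonempty x
  have hmax : 0 ≤ E.sup' hE (fun e => ∏ u ∈ e, x u) :=
    le_sup'_of_le _ hE.choose_spec (prod_nonneg fun u _ => hx u)
  rw [hv, mul_pow_eq_sum_prod_of_eigen hk heig v]
  calc ∑ e ∈ E with v ∈ e, ∏ u ∈ e, x u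
      ≤ #{e ∈ E | v ∈ e} • E.sup' hE (fun e => ∏ u ∈ e, x u) :=
        sum_le_card_nsmul _ _ _ fun e he =>
          le_sup' (fun e => ∏ u ∈ e, x u) (mem_filter.mp he).1
    _ = #{e ∈ E | v ∈ e} * E.sup' hE (fun e => ∏ u ∈ e, x u) := nsmul_eq_mul _ _
    _ ≤ _ := mul_le_mul_of_nonneg_right
        (le_sup' (fun v => (#{e ∈ E | v ∈ e} : ℝ)) (mem_univ v)) hmax

lemma inf'_mul_le_mul_inf'_pow_of_eigen (hk : 1 ≤ k)
    (heig : ∀ v, ∑ e ∈ E with v ∈ e, ∏ u ∈ e.erase v, x u = ρ * x v ^ (k - 1))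
    (hx : ∀ v, 0 ≤ x v) (hE : E.Nonempty) :
    univ.inf' univ_nonempty (fun v => (#{e ∈ E | v ∈ e} : ℝ))
        * E.inf' hE (fun e => ∏ u ∈ e, x u)
      ≤ ρ * univ.inf' univ_nonempty x ^ k := by
  obtain ⟨v, -, hv⟩ := exists_mem_eq_inf' univ_nonempty x
  have hmin : 0 ≤ E.inf' hE (fun e => ∏ u ∈ e, x u) :=
    le_inf' _ _ fun e _ => prod_nonneg fun u _ => hx u
  rw [hv, mul_pow_eq_sum_prod_of_eigen hk heig v]
  calc _ ≤ #{e ∈ E | v ∈ e} * E.inf' hE (fun e => ∏ u ∈ e, x u) :=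
        mul_le_mul_of_nonneg_right
          (inf'_le (fun v => (#{e ∈ E | v ∈ e} : ℝ)) (mem_univ v)) hmin
    _ = #{e ∈ E | v ∈ e} • E.inf' hE (fun e => ∏ u ∈ e, x u) := (nsmul_eq_mul _ _).symm
    _ ≤ ∑ e ∈ E with v ∈ e, ∏ u ∈ e, x u :=
        card_nsmul_le_sum _ _ _ fun e he =>
          inf'_le (fun e => ∏ u ∈ e, x u) (mem_filter.mp he).1

lemma pow_le_degree_ratio_mul_of_eigen (hk : 1 ≤ k) (hunif : ∀ e ∈ E, #e = k)
    (hx : ∀ v, 0 < x v)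
    (heig : ∀ v, ∑ e ∈ E with v ∈ e, ∏ u ∈ e.erase v, x u = ρ * x v ^ (k - 1))
    (hE : E.Nonempty)
    (hδ : 0 < univ.inf' univ_nonempty (fun v => (#{e ∈ E | v ∈ e} : ℝ))) :
    (univ.sup' univ_nonempty x / univ.inf' univ_nonempty x) ^ k
      ≤ univ.sup' univ_nonempty (fun v => (#{e ∈ E | v ∈ e} : ℝ))
          / univ.inf' univ_nonempty (fun v => (#{e ∈ E | v ∈ e} : ℝ))
        * (E.sup' hE (fun e => ∏ u ∈ e, x u) / E.inf' hE (fun e => ∏ u ∈ e, x u)) := by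
  have hxmax : 0 ≤ univ.sup' univ_nonempty x :=
    le_sup'_of_le x (mem_univ (Classical.arbitrary V)) (hx _).le
  have hxmin : 0 < univ.inf' univ_nonempty x := (lt_inf'_iff _).2 fun v _ => hx v
  have hedge : 0 < E.inf' hE (fun e => ∏ u ∈ e, x u) :=
    (pow_pos hxmin k).trans_le (le_inf' _ _ fun e he => inf'_pow_le_prod hunif (fun v => (hx v).le) he)
  have hup := mul_sup'_pow_le_of_eigen hk heig (fun v => (hx v).le) hE
  have hlow := inf'_mul_le_mul_inf'_pow_of_eigen hk heig (fun v => (hx v).le) hE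
  rw [div_pow, div_mul_div_comm, div_le_div_iff₀ (by positivity) (by positivity)]
  calc _ ≤ univ.sup' univ_nonempty x ^ k * (ρ * univ.inf' univ_nonempty x ^ k) :=
        mul_le_mul_of_nonneg_left hlow (by positivity)
    _ = ρ * univ.sup' univ_nonempty x ^ k * univ.inf' univ_nonempty x ^ k := by ring
    _ ≤ _ := mul_le_mul_of_nonneg_right hup (by positivity)

end UniformHypergraph

theorem stmt17_general (V : Type*) [Fintype V] [DecidableEq V] [Nonempty V]
    (k : ℕ) (hk : 2 ≤ k)
    (E : Finset (Finset V))
    (hunif : ∀ e ∈ E, e.card = k)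
    (x : V → ℝ) (hx : ∀ v, 0 < x v)
    (ρ : ℝ)
    (heig : ∀ v : V, ∑ e ∈ E.filter (fun e => v ∈ e), ∏ u ∈ e.erase v, x u
      = ρ * x v ^ (k - 1))
    (hE : E.Nonempty)
    (hδ : 0 < (Finset.univ.inf' Finset.univ_nonempty (fun v => ((E.filter (fun e => v ∈ e)).card : ℝ)))) :
    (E.sup' hE (fun e => ∏ u ∈ e, x u) / E.inf' hE (fun e => ∏ u ∈ e, x u)) ^ ((1:ℝ)/(k:ℝ))
      ≤ (Finset.univ.sup' Finset.univ_nonempty x) / (Finset.univ.inf' Finset.univ_nonempty x) ∧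
    (Finset.univ.sup' Finset.univ_nonempty x) / (Finset.univ.inf' Finset.univ_nonempty x) ≤
      (((Finset.univ.sup' Finset.univ_nonempty (fun v => ((E.filter (fun e => v ∈ e)).card : ℝ))) / (Finset.univ.inf' Finset.univ_nonempty (fun v => ((E.filter (fun e => v ∈ e)).card : ℝ)))) * (E.sup' hE (fun e => ∏ u ∈ e, x u) / E.inf' hE (fun e => ∏ u ∈ e, x u))) ^ ((1:ℝ)/(k:ℝ)) := by
  have hk1 : 1 ≤ k := by omega
  have hk0 : (0 : ℝ) < k := by exact_mod_cast hk1
  have hγ := sup'_div_inf'_pos univ_nonempty fun v _ => hx v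
  have hΓ := sup'_div_inf'_pos (f := fun e => ∏ u ∈ e, x u) hE fun e _ => prod_pos fun u _ => hx u
  have hΔδ := sup'_div_inf'_pos univ_nonempty ((lt_inf'_iff _).1 hδ)
  rw [one_div]
  constructor
  · rw [Real.rpow_inv_le_iff_of_pos hΓ.le hγ.le hk0, Real.rpow_natCast]
    exact sup'_prod_div_inf'_prod_le_pow hunif hx hE
  · rw [Real.le_rpow_inv_iff_of_pos hγ.le (mul_pos hΔδ hΓ).le hk0, Real.rpow_natCast]
    exact pow_le_degree_ratio_mul_of_eigen hk1 hunif hx heig hE hδ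

theorem stmt17 (V : Type*) [Fintype V] [DecidableEq V] [Nonempty V]
    (k : ℕ) (hk : 2 ≤ k)
    (E : Finset (Finset V))
    (hunif : ∀ e ∈ E, e.card = k)
    (x : V → ℝ) (hx : ∀ v, 0 < x v)
    (ρ : ℝ) (hρ : 0 < ρ)
    (heig : ∀ v : V, ∑ e ∈ E.filter (fun e => v ∈ e), ∏ u ∈ e.erase v, x u
      = ρ * x v ^ (k - 1))
    (hE : E.Nonempty)
    (hδ : 0 < (Finset.univ.inf' Finset.univ_nonempty (fun v => ((E.filter (fun e => v ∈ e)).card : ℝ)))) :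
    (E.sup' hE (fun e => ∏ u ∈ e, x u) / E.inf' hE (fun e => ∏ u ∈ e, x u)) ^ ((1:ℝ)/(k:ℝ))
      ≤ (Finset.univ.sup' Finset.univ_nonempty x) / (Finset.univ.inf' Finset.univ_nonempty x) ∧
    (Finset.univ.sup' Finset.univ_nonempty x) / (Finset.univ.inf' Finset.univ_nonempty x) ≤
      (((Finset.univ.sup' Finset.univ_nonempty (fun v => ((E.filter (fun e => v ∈ e)).card : ℝ))) / (Finset.univ.inf' Finset.univ_nonempty (fun v => ((E.filter (fun e => v ∈ e)).card : ℝ)))) * (E.sup' hE (fun e => ∏ u ∈ e, x u) / E.inf' hE (fun e => ∏ u ∈ e, x u))) ^ ((1:ℝ)/(k:ℝ)) :=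
  stmt17_general V k hk E hunif x hx ρ heig hE hδ
end
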